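/- arXiv:math/9912178 — 2 statements merged into one kernel-verified Lean document; each statement's English description precedes it below -/
import Mathlib

section
/- (Theorem 2.3.) Let μ be a σ-invariant Borel probability measure on the two-sided subshift Σ_A, and suppose there exists a cylinder C̃ with 0 < μ(C̃) < 1. Let (l_n)_{n≥1} be a sequence of positive integers with l_n → ∞. Then there exists a sequence of cylinders (C_n)_{n≥1}, defined on finite intervals Λ_n = [n_n⁻, n_n⁺] ⊂ ℤ that are (l_n)-centered (i.e. |n_n⁻ + n_n⁺| ≤ l_n for every n), with ∑_{n=1}^∞ μ(C_n) = ∞, which does NOT satisfy condition (SP): for every constant C > 0 there exists N ≥ 1 such that ∑_{m,n=1}^N [ μ(σ^{-m}(C_m) ∩ σ^{-n}(C_n)) − μ(C_m)μ(C_n) ] > C·∑_{n=1}^N μ(C_n). -/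
/-!
If `μ` has an atom `x`, the cylinders `F n` of `x` on `[-n, 3n]` decrease to `{x}`, of measure
`c ∈ (0, 1)`. All their pairwise intersections have measure at least `c`, so the covariance sum up
to `N` is at least `N²c - (∑ μ(F n))² ≈ N²(c - c²)`, which beats any multiple of `∑ μ(F n) ≤ N`.

Otherwise there are cylinders `G` of arbitrarily small positive measure. Since `l n → ∞`, a
translate of one such `G` may be used at `L ≈ 1/μ(G)` consecutive times; such a block adds about
`1` to `∑ μ(F n)` but `L` to the covariance sum. Blocks with `L` large compared to the number of
earlier blocks, separated by fillers of summable measure, defeat every constant.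

In both cases `F n = σ⁻ⁿ Cₙ` for a cylinder `Cₙ` centred near `0`, and shift invariance transfers
the estimates from `F n` to `Cₙ`.
-/

open MeasureTheory Filter

/-- The two-sided subshift of finite type `Σ_A ⊆ {1,…,M}^ℤ`. -/
def shiftSpace (M : ℕ) (Amat : Fin M → Fin M → Bool) : Set (ℤ → Fin M) :=
  {ω | ∀ i : ℤ, Amat (ω i) (ω (i + 1)) = true}

/-- The left shift `(σω)_i = ω_{i+1}` on two-sided sequences. -/
def shiftMap (M : ℕ) : (ℤ → Fin M) → (ℤ → Fin M) := fun ω i => ω (i + 1)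

/-- `C` is a cylinder on the interval `[a, b] ⊆ ℤ` (relative to `Σ_A`). -/
def IsCylinderOn (M : ℕ) (Amat : Fin M → Fin M → Bool) (a b : ℤ)
    (C : Set (ℤ → Fin M)) : Prop :=
  ∃ w : ℤ → Fin M,
    C = {ω | ω ∈ shiftSpace M Amat ∧ ∀ i : ℤ, a ≤ i → i ≤ b → ω i = w i} ∧ C.Nonempty

open Finset Topology

section Covariance

variable {α : Type*} [MeasurableSpace α] (μ : Measure α) (F : ℕ → Set α)

def measureSum (N : ℕ) : ℝ := ∑ n ∈ Icc 1 N, μ.real (F n)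

def covarianceSum (N : ℕ) : ℝ :=
  ∑ m ∈ Icc 1 N, ∑ n ∈ Icc 1 N, (μ.real (F m ∩ F n) - μ.real (F m) * μ.real (F n))

/-- Condition (SP) with lower summation index `1` fails for every constant `K`. -/
def FailsSP : Prop := ∀ K : ℝ, ∃ N, 1 ≤ N ∧ K * measureSum μ F N < covarianceSum μ F N

lemma covarianceSum_eq (N : ℕ) :
    covarianceSum μ F N =
      ∑ m ∈ Icc 1 N, ∑ n ∈ Icc 1 N, μ.real (F m ∩ F n) - measureSum μ F N ^ 2 := by
  simp only [covarianceSum, measureSum, sum_sub_distrib, sq, sum_mul_sum]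

lemma measureSum_nonneg (N : ℕ) : 0 ≤ measureSum μ F N :=
  sum_nonneg fun _ _ ↦ measureReal_nonneg

lemma monotone_measureSum : Monotone (measureSum μ F) := fun _ _ h ↦
  sum_le_sum_of_subset_of_nonneg (Icc_subset_Icc_right h) fun _ _ _ ↦ measureReal_nonneg

end Covariance

lemma sum_Icc_one_eq_sum_range {β : ℕ → ℝ} (N : ℕ) :
    ∑ n ∈ Icc 1 N, β n = ∑ i ∈ range N, β (1 + i) := by
  rw [← Ico_add_one_right_eq_Icc, sum_Ico_eq_sum_range, Nat.add_sub_cancel]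

lemma eventually_mul_sum_lt {β : ℕ → ℝ} {c : ℝ} (hβ : Tendsto β atTop (𝓝 c))
    (hc : c ^ 2 < c) (K : ℝ) :
    ∀ᶠ N : ℕ in atTop, K * ∑ n ∈ Icc 1 N, β n < N ^ 2 * c - (∑ n ∈ Icc 1 N, β n) ^ 2 := by
  set S : ℕ → ℝ := fun N ↦ ∑ n ∈ Icc 1 N, β n
  have hmean : Tendsto (fun N : ℕ ↦ (N : ℝ)⁻¹ * S N) atTop (𝓝 c) := by
    simpa only [S, sum_Icc_one_eq_sum_range] using
      (hβ.comp (tendsto_add_atTop_nat 1)).cesaro.congr fun N ↦ by simp [add_comm]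
  -- the claimed inequality divided by `N ^ 2`
  have hlim : Tendsto (fun N : ℕ ↦
      c - ((N : ℝ)⁻¹ * S N) ^ 2 - K * ((N : ℝ)⁻¹ * S N) * (N : ℝ)⁻¹)
      atTop (𝓝 (c - c ^ 2 - K * c * 0)) :=
    (tendsto_const_nhds.sub (hmean.pow 2)).sub ((tendsto_const_nhds.mul hmean).mul
      (tendsto_inv_atTop_zero.comp tendsto_natCast_atTop_atTop))
  filter_upwards [hlim.eventually_const_lt (u := 0) (by linarith), eventually_ge_atTop 1]
    with N hN hN1
  have := mul_lt_mul_of_pos_left hN (pow_pos (Nat.cast_pos.2 hN1) 2)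
  field_simp at this
  simp only [S] at this
  linarith

section Antitone

variable {α : Type*} [MeasurableSpace α] {μ : Measure α} [IsFiniteMeasure μ] {F : ℕ → Set α}

theorem tendsto_measureSum_and_failsSP_of_antitone (hF : ∀ n, MeasurableSet (F n))
    (hanti : Antitone F) (hpos : 0 < μ.real (⋂ n, F n)) (hlt : μ.real (⋂ n, F n) < 1) :
    Tendsto (measureSum μ F) atTop atTop ∧ FailsSP μ F := by
  set c := μ.real (⋂ n, F n)
  have hlim : Tendsto (fun n ↦ μ.real (F n)) atTop (𝓝 c) :=
    (ENNReal.tendsto_toReal (measure_ne_top μ _)).comp (tendsto_measure_iInter_atTop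
      (fun n ↦ (hF n).nullMeasurableSet) hanti ⟨0, measure_ne_top μ _⟩)
  have hinter (m n : ℕ) : c ≤ μ.real (F m ∩ F n) :=
    measureReal_mono (Set.subset_inter (Set.iInter_subset F m) (Set.iInter_subset F n))
  have hsum (N : ℕ) : N * c ≤ measureSum μ F N := by
    have := sum_le_sum fun n (_ : n ∈ Icc 1 N) ↦ Set.inter_self (F n) ▸ hinter n n
    simpa [measureSum] using this
  refine ⟨tendsto_atTop_mono hsum (tendsto_natCast_atTop_atTop.atTop_mul_const hpos),
    fun K ↦ ?_⟩
  obtain ⟨N, hK, hN⟩ :=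
    ((eventually_mul_sum_lt hlim (by nlinarith) K).and (eventually_ge_atTop 1)).exists
  refine ⟨N, hN, hK.trans_le ?_⟩
  have hdouble : ∑ m ∈ Icc 1 N, ∑ n ∈ Icc 1 N, c ≤
      ∑ m ∈ Icc 1 N, ∑ n ∈ Icc 1 N, μ.real (F m ∩ F n) :=
    sum_le_sum fun m _ ↦ sum_le_sum fun n _ ↦ hinter m n
  simp only [sum_const, Nat.card_Icc, nsmul_eq_mul] at hdouble
  push_cast at hdouble
  rw [covarianceSum_eq]
  simp only [measureSum]
  nlinarith

end Antitone

section Blocks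

variable (u L : ℕ → ℕ)

def block (k : ℕ) : Finset ℕ := Ico (u k) (u k + L k)

open Classical in
noncomputable def blockSeq {β : Type*} (E H : ℕ → β) (n : ℕ) : β :=
  if h : ∃ k, n ∈ block u L k then E (Nat.find h) else H n

variable {u L}

lemma card_block (k : ℕ) : #(block u L k) = L k := by
  simp [block]

lemma monotone_of_add_le_succ (hu : ∀ k, u k + L k ≤ u (k + 1)) : Monotone u :=
  monotone_nat_of_le_succ fun k ↦ le_of_add_le_left (hu k)

lemma add_le_of_lt_of_add_le_succ (hu : ∀ k, u k + L k ≤ u (k + 1)) {j k : ℕ} (hjk : j < k) :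
    u j + L j ≤ u k :=
  (hu j).trans (monotone_of_add_le_succ hu hjk)

lemma eq_of_mem_block (hu : ∀ k, u k + L k ≤ u (k + 1)) {n j k : ℕ}
    (hj : n ∈ block u L j) (hk : n ∈ block u L k) : j = k := by
  simp only [block, mem_Ico] at hj hk
  by_contra hne
  rcases Nat.lt_or_gt_of_ne hne with h | h
  · have := add_le_of_lt_of_add_le_succ hu h; omega
  · have := add_le_of_lt_of_add_le_succ hu h; omega

lemma blockSeq_of_mem {β : Type*} {E H : ℕ → β} (hu : ∀ k, u k + L k ≤ u (k + 1)) {n k : ℕ}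
    (hn : n ∈ block u L k) : blockSeq u L E H n = E k := by
  have h : ∃ k, n ∈ block u L k := ⟨k, hn⟩
  rw [blockSeq, dif_pos h, eq_of_mem_block hu (Nat.find_spec h) hn]

lemma blockSeq_of_forall_notMem {β : Type*} {E H : ℕ → β} {n : ℕ}
    (hn : ∀ k, n ∉ block u L k) : blockSeq u L E H n = H n :=
  dif_neg (not_exists.2 hn)

lemma biUnion_block_subset_Icc (hu : ∀ k, u k + L k ≤ u (k + 1)) (hu0 : 1 ≤ u 0) (k : ℕ) :
    (range (k + 1)).biUnion (block u L) ⊆ Icc 1 (u k + L k - 1) := by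
  intro n hn
  simp only [mem_biUnion, mem_range, block, mem_Ico] at hn
  obtain ⟨j, hj, hjn, hnj⟩ := hn
  have h0 := monotone_of_add_le_succ hu (Nat.zero_le j)
  rw [mem_Icc]
  rcases (Nat.lt_succ_iff.1 hj).lt_or_eq with h | rfl
  · have := add_le_of_lt_of_add_le_succ hu h; omega
  · omega

lemma forall_notMem_block_of_mem_sdiff (hu : ∀ k, u k + L k ≤ u (k + 1)) {k n : ℕ}
    (hn : n ∈ Icc 1 (u k + L k - 1) \ (range (k + 1)).biUnion (block u L)) (j : ℕ) :
    n ∉ block u L j := by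
  rw [Finset.mem_sdiff, mem_biUnion, mem_Icc] at hn
  intro hj
  rcases Nat.lt_or_ge j (k + 1) with h | h
  · exact hn.2 ⟨j, mem_range.2 h, hj⟩
  · have := add_le_of_lt_of_add_le_succ hu (Nat.lt_of_lt_of_le (Nat.lt_succ_self k) h)
    simp only [block, mem_Ico] at hj
    omega

variable {α : Type*} [MeasurableSpace α] {μ : Measure α} {E H : ℕ → Set α}

lemma sum_measureReal_blockSeq_block (hu : ∀ k, u k + L k ≤ u (k + 1)) (k : ℕ) :
    ∑ n ∈ block u L k, μ.real (blockSeq u L E H n) = L k * μ.real (E k) := by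
  rw [sum_congr rfl fun n hn ↦ by rw [blockSeq_of_mem hu hn], sum_const, card_block,
    nsmul_eq_mul]

lemma measureSum_blockSeq_bounds (hu : ∀ k, u k + L k ≤ u (k + 1)) (hu0 : 1 ≤ u 0)
    (hE : ∀ k, 1 ≤ L k * μ.real (E k) ∧ L k * μ.real (E k) ≤ 2)
    (hH : ∀ n, μ.real (H n) ≤ (1 / 2) ^ n) (k : ℕ) :
    k + 1 ≤ measureSum μ (blockSeq u L E H) (u k + L k - 1) ∧
      measureSum μ (blockSeq u L E H) (u k + L k - 1) ≤ 2 * k + 4 := by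
  set U := (range (k + 1)).biUnion (block u L)
  have hdisj : ((range (k + 1) : Finset ℕ) : Set ℕ).PairwiseDisjoint (block u L) :=
    fun i _ j _ hij ↦ disjoint_left.2 fun n hi hj ↦ hij (eq_of_mem_block hu hi hj)
  have hblocks : ∑ n ∈ U, μ.real (blockSeq u L E H n) =
      ∑ j ∈ range (k + 1), L j * μ.real (E j) := by
    rw [sum_biUnion hdisj]
    exact sum_congr rfl fun j _ ↦ sum_measureReal_blockSeq_block hu j
  have hfill : ∑ n ∈ Icc 1 (u k + L k - 1) \ U, μ.real (blockSeq u L E H n) ≤ 2 :=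
    calc _ = ∑ n ∈ Icc 1 (u k + L k - 1) \ U, μ.real (H n) :=
          sum_congr rfl fun n hn ↦ by
            rw [blockSeq_of_forall_notMem (forall_notMem_block_of_mem_sdiff hu hn)]
      _ ≤ ∑ n ∈ Icc 1 (u k + L k - 1) \ U, (1 / 2 : ℝ) ^ n := sum_le_sum fun n _ ↦ hH n
      _ ≤ ∑' n, (1 / 2 : ℝ) ^ n :=
          summable_geometric_two.sum_le_tsum _ fun _ _ ↦ by positivity
      _ = 2 := tsum_geometric_two
  have hfill0 : 0 ≤ ∑ n ∈ Icc 1 (u k + L k - 1) \ U, μ.real (blockSeq u L E H n) :=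
    sum_nonneg fun _ _ ↦ measureReal_nonneg
  have hlow : ∑ j ∈ range (k + 1), (1 : ℝ) ≤ ∑ j ∈ range (k + 1), L j * μ.real (E j) :=
    sum_le_sum fun j _ ↦ (hE j).1
  have hupp : ∑ j ∈ range (k + 1), L j * μ.real (E j) ≤ ∑ j ∈ range (k + 1), (2 : ℝ) :=
    sum_le_sum fun j _ ↦ (hE j).2
  simp only [sum_const, card_range, nsmul_eq_mul, mul_one] at hlow hupp
  push_cast at hlow hupp
  rw [measureSum, ← sum_sdiff (biUnion_block_subset_Icc hu hu0 k), hblocks]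
  constructor <;> linarith

theorem tendsto_measureSum_and_failsSP_blockSeq (hu : ∀ k, u k + L k ≤ u (k + 1))
    (hu0 : 1 ≤ u 0) (hE : ∀ k, 1 ≤ L k * μ.real (E k) ∧ L k * μ.real (E k) ≤ 2)
    (hH : ∀ n, μ.real (H n) ≤ (1 / 2) ^ n) (hL : ∀ k, 6 * (k + 2) ^ 2 < L k) :
    Tendsto (measureSum μ (blockSeq u L E H)) atTop atTop ∧ FailsSP μ (blockSeq u L E H) := by
  have hS := measureSum_blockSeq_bounds hu hu0 hE hH
  refine ⟨tendsto_atTop_atTop_of_monotone (monotone_measureSum μ _) fun b ↦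
    ⟨_, (Nat.le_ceil b).trans ((le_add_of_nonneg_right zero_le_one).trans (hS ⌈b⌉₊).1)⟩,
    fun K ↦ ?_⟩
  set k := ⌈K⌉₊
  set N := u k + L k - 1
  have hBI : block u L k ⊆ Icc 1 N :=
    (subset_biUnion_of_mem (block u L) (self_mem_range_succ k)).trans
      (biUnion_block_subset_Icc hu hu0 k)
  have hdiag : (L k : ℝ) ≤
      ∑ m ∈ Icc 1 N, ∑ n ∈ Icc 1 N, μ.real (blockSeq u L E H m ∩ blockSeq u L E H n) :=
    calc (L k : ℝ) ≤ L k * (L k * μ.real (E k)) :=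
          le_mul_of_one_le_right (Nat.cast_nonneg _) (hE k).1
      _ = ∑ m ∈ block u L k, ∑ n ∈ block u L k,
            μ.real (blockSeq u L E H m ∩ blockSeq u L E H n) := by
        rw [sum_congr rfl fun m hm ↦ sum_congr rfl fun n hn ↦ by
          rw [blockSeq_of_mem hu hm, blockSeq_of_mem hu hn, Set.inter_self]]
        simp only [sum_const, card_block, nsmul_eq_mul]
      _ ≤ _ := (sum_le_sum fun m _ ↦ sum_le_sum_of_subset_of_nonneg hBI
          fun _ _ _ ↦ measureReal_nonneg).trans
        (sum_le_sum_of_subset_of_nonneg hBI fun _ _ _ ↦ sum_nonneg fun _ _ ↦ measureReal_nonneg)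
  refine ⟨N, ?_, ?_⟩
  · have := monotone_of_add_le_succ hu (Nat.zero_le k)
    have := hL k
    omega
  · rw [covarianceSum_eq]
    have hK : K ≤ k := Nat.le_ceil K
    have hLk : (6 * (k + 2) ^ 2 : ℝ) < L k := by exact_mod_cast hL k
    have := hS k
    have := measureSum_nonneg μ (blockSeq u L E H) N
    -- `6 (k + 2) ^ 2 ≥ S ^ 2 + k S` for `0 ≤ S ≤ 2 k + 4`
    nlinarith

end Blocks

lemma one_le_natCeil_inv_mul {γ : ℝ} (hγ : 0 < γ) : 1 ≤ ⌈γ⁻¹⌉₊ * γ := by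
  simpa [inv_mul_cancel₀ hγ.ne'] using mul_le_mul_of_nonneg_right (Nat.le_ceil γ⁻¹) hγ.le

lemma natCeil_inv_mul_le_two {γ : ℝ} (hγ : 0 < γ) (hγ1 : γ ≤ 1) : ⌈γ⁻¹⌉₊ * γ ≤ 2 := by
  have := mul_le_mul_of_nonneg_right (Nat.ceil_lt_add_one (inv_nonneg.2 hγ.le)).le hγ.le
  rw [add_mul, inv_mul_cancel₀ hγ.ne', one_mul] at this
  linarith

section Subshift

variable {M : ℕ} {Amat : Fin M → Fin M → Bool}

variable (Amat) in
def cylinderOn (a b : ℤ) (w : ℤ → Fin M) : Set (ℤ → Fin M) :=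
  {ω | ω ∈ shiftSpace M Amat ∧ ∀ i : ℤ, a ≤ i → i ≤ b → ω i = w i}

lemma cylinderOn_eq_inter_pi (a b : ℤ) (w : ℤ → Fin M) :
    cylinderOn Amat a b w = shiftSpace M Amat ∩ (Set.Icc a b).pi fun i ↦ {w i} := by
  ext ω
  simp [cylinderOn, Set.mem_pi, and_imp]

lemma measurableSet_shiftSpace : MeasurableSet (shiftSpace M Amat) := by
  rw [shiftSpace, Set.ofPred_forall]
  exact MeasurableSet.iInter fun i ↦
    (Set.toFinite {p : Fin M × Fin M | Amat p.1 p.2}).measurableSet.preimage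
      (f := fun ω : ℤ → Fin M ↦ (ω i, ω (i + 1)))
      ((measurable_pi_apply i).prodMk (measurable_pi_apply (i + 1)))

lemma measurableSet_cylinderOn (a b : ℤ) (w : ℤ → Fin M) :
    MeasurableSet (cylinderOn Amat a b w) := by
  rw [cylinderOn_eq_inter_pi]
  exact measurableSet_shiftSpace.inter
    (MeasurableSet.pi (Set.to_countable _) fun _ _ ↦ measurableSet_singleton _)

lemma IsCylinderOn.measurableSet {a b : ℤ} {C : Set (ℤ → Fin M)}
    (h : IsCylinderOn M Amat a b C) : MeasurableSet C := by
  obtain ⟨w, rfl, -⟩ := h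
  exact measurableSet_cylinderOn a b w

lemma shiftMap_iterate_apply (s : ℕ) (ω : ℤ → Fin M) (i : ℤ) :
    (shiftMap M)^[s] ω i = ω (i + s) := by
  induction s generalizing ω with
  | zero => simp
  | succ s ih =>
    rw [Function.iterate_succ_apply, ih]
    simp only [shiftMap]
    congr 1
    push_cast
    ring

lemma preimage_iterate_cylinderOn (s : ℕ) (a b : ℤ) (w : ℤ → Fin M) :
    (shiftMap M)^[s] ⁻¹' cylinderOn Amat a b w =
      cylinderOn Amat (a + s) (b + s) fun i ↦ w (i - s) := by
  ext ω
  simp only [cylinderOn, shiftSpace, Set.mem_preimage, Set.mem_ofPred_eq, shiftMap_iterate_apply]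
  refine and_congr ⟨fun h i ↦ ?_, fun h i ↦ ?_⟩ ⟨fun h i hi hi' ↦ ?_, fun h i hi hi' ↦ ?_⟩
  · simpa [add_right_comm] using h (i - s)
  · simpa [add_right_comm] using h (i + s)
  · simpa using h (i - s) (by omega) (by omega)
  · simpa using h (i + s) (by omega) (by omega)

lemma IsCylinderOn.preimage_iterate {a b : ℤ} {C : Set (ℤ → Fin M)}
    (h : IsCylinderOn M Amat a b C) (s : ℕ) :
    IsCylinderOn M Amat (a + s) (b + s) ((shiftMap M)^[s] ⁻¹' C) := by
  obtain ⟨w, rfl, ω, hω⟩ := h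
  have hω' : (shiftMap M)^[s] (fun i ↦ ω (i - s)) = ω :=
    funext fun i ↦ by simp [shiftMap_iterate_apply]
  exact ⟨_, preimage_iterate_cylinderOn s a b w, _, by rw [Set.mem_preimage, hω']; exact hω⟩

lemma IsCylinderOn.exists_preimage_iterate_eq {a b : ℤ} {F : Set (ℤ → Fin M)}
    (h : IsCylinderOn M Amat a b F) (s : ℕ) :
    ∃ C, IsCylinderOn M Amat (a - s) (b - s) C ∧ (shiftMap M)^[s] ⁻¹' C = F := by
  obtain ⟨w, rfl, ω, hω⟩ := h
  have hpre : (shiftMap M)^[s] ⁻¹' cylinderOn Amat (a - s) (b - s) (fun i ↦ w (i + s)) =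
      cylinderOn Amat a b w := by
    simp [preimage_iterate_cylinderOn]
  have hC : (shiftMap M)^[s] ω ∈ cylinderOn Amat (a - s) (b - s) (fun i ↦ w (i + s)) := by
    rw [← Set.mem_preimage, hpre]
    exact hω
  exact ⟨_, ⟨_, rfl, _, hC⟩, hpre⟩

end Subshift

section Construction

variable {M : ℕ} {Amat : Fin M → Fin M → Bool} {μ : Measure (ℤ → Fin M)}

/-- `F n` is a cylinder on an interval centred within `l n / 2` of `n`; these are the sets
`σ⁻ⁿ Cₙ` for `(l n)`-centered cylinders `Cₙ`. -/
def IsCenteredCylinderSeq (Amat : Fin M → Fin M → Bool) (l : ℕ → ℕ)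
    (F : ℕ → Set (ℤ → Fin M)) : Prop :=
  ∀ n, ∃ a b : ℤ, a ≤ b ∧ IsCylinderOn M Amat a b (F n) ∧ |a + b - 2 * n| ≤ l n

theorem exists_cylinders_of_isCenteredCylinderSeq (hinv : MeasurePreserving (shiftMap M) μ μ)
    {l : ℕ → ℕ} {F : ℕ → Set (ℤ → Fin M)} (hF : IsCenteredCylinderSeq Amat l F)
    (hdiv : Tendsto (measureSum μ F) atTop atTop) (hSP : FailsSP μ F) :
    ∃ (C : ℕ → Set (ℤ → Fin M)) (a b : ℕ → ℤ),
      (∀ n, 1 ≤ n → a n ≤ b n ∧ IsCylinderOn M Amat (a n) (b n) (C n) ∧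
        |a n + b n| ≤ (l n : ℤ)) ∧
      Tendsto (fun N : ℕ => ∑ n ∈ Finset.Icc 1 N, (μ (C n)).toReal) atTop atTop ∧
      ∀ K : ℝ, 0 < K → ∃ N : ℕ, 1 ≤ N ∧
        K * ∑ n ∈ Finset.Icc 1 N, (μ (C n)).toReal <
          ∑ m ∈ Finset.Icc 1 N, ∑ n ∈ Finset.Icc 1 N,
            ((μ ((shiftMap M)^[m] ⁻¹' C m ∩ (shiftMap M)^[n] ⁻¹' C n)).toReal -
              (μ (C m)).toReal * (μ (C n)).toReal) := by
  choose a b hab hcyl hcen using hF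
  choose C hC hCF using fun n ↦ (hcyl n).exists_preimage_iterate_eq n
  have hμ (n : ℕ) : μ (C n) = μ (F n) := by
    rw [← hCF n, (hinv.iterate n).measure_preimage (hC n).measurableSet.nullMeasurableSet]
  refine ⟨C, fun n ↦ a n - n, fun n ↦ b n - n, fun n _ ↦ ⟨by linarith [hab n], hC n, ?_⟩,
    ?_, fun K _ ↦ ?_⟩
  · rw [show a n - n + (b n - n) = a n + b n - 2 * n by ring]
    exact hcen n
  · simp only [hμ, ← measureReal_def]
    exact hdiv
  · simpa only [hμ, hCF, ← measureReal_def, measureSum, covarianceSum] using hSP K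

theorem exists_isCenteredCylinderSeq_of_atom [IsProbabilityMeasure μ]
    (hsupp : μ (shiftSpace M Amat) = 1) {a b : ℤ} {Ct : Set (ℤ → Fin M)}
    (hCt : IsCylinderOn M Amat a b Ct) (hCt0 : 0 < μ Ct) (hCt1 : μ Ct < 1)
    {x : ℤ → Fin M} (hx : μ {x} ≠ 0) (l : ℕ → ℕ) :
    ∃ F, IsCenteredCylinderSeq Amat l F ∧ Tendsto (measureSum μ F) atTop atTop ∧
      FailsSP μ F := by
  have hxA : x ∈ shiftSpace M Amat := by
    by_contra h
    exact hx (measure_mono_null (Set.singleton_subset_iff.2 h)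
      ((prob_compl_eq_zero_iff measurableSet_shiftSpace).2 hsupp))
  have hx1 : μ {x} < 1 := by
    by_cases h : x ∈ Ct
    · exact (measure_mono (Set.singleton_subset_iff.2 h)).trans_lt hCt1
    · calc μ {x} ≤ μ Ctᶜ := measure_mono (Set.singleton_subset_iff.2 h)
        _ = 1 - μ Ct := prob_compl_eq_one_sub hCt.measurableSet
        _ < 1 := ENNReal.sub_lt_self ENNReal.one_ne_top one_ne_zero hCt0.ne'
  set F : ℕ → Set (ℤ → Fin M) := fun n ↦ cylinderOn Amat (-n) (3 * n) x
  have hanti : Antitone F := fun m n hmn ω hω ↦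
    ⟨hω.1, fun i hi hi' ↦ hω.2 i (by omega) (by omega)⟩
  have hinter : ⋂ n, F n = {x} := by
    refine Set.Subset.antisymm (fun ω hω ↦ funext fun i ↦ ?_) ?_
    · exact (Set.mem_iInter.1 hω i.natAbs).2 i (by omega) (by omega)
    · exact Set.singleton_subset_iff.2 (Set.mem_iInter.2 fun n ↦ ⟨hxA, fun _ _ _ ↦ rfl⟩)
  refine ⟨F, fun n ↦ ⟨-n, 3 * n, by omega, ⟨x, rfl, x, hxA, fun _ _ _ ↦ rfl⟩, ?_⟩,
    tendsto_measureSum_and_failsSP_of_antitone (fun n ↦ measurableSet_cylinderOn _ _ x) hanti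
      ?_ ?_⟩
  · rw [show -(n : ℤ) + 3 * n - 2 * n = 0 by ring, abs_zero]
    exact Nat.cast_nonneg _
  · rw [hinter]
    exact ENNReal.toReal_pos hx (measure_ne_top μ _)
  · rw [hinter, measureReal_def]
    simpa using (ENNReal.toReal_lt_toReal (measure_ne_top μ _) ENNReal.one_ne_top).2 hx1

lemma exists_isCylinderOn_measureReal_pos_le [IsFiniteMeasure μ] [NullSingletonClass μ]
    (hsupp : μ (shiftSpace M Amat) ≠ 0) {ε : ℝ} (hε : 0 < ε) :
    ∃ (r : ℕ) (G : Set (ℤ → Fin M)),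
      IsCylinderOn M Amat (-r) r G ∧ 0 < μ.real G ∧ μ.real G ≤ ε := by
  obtain ⟨x, -, hpos⟩ := exists_mem_forall_mem_nhdsWithin_pos_measure hsupp
  set G : ℕ → Set (ℤ → Fin M) := fun r ↦ cylinderOn Amat (-r) r x
  have hGpos (r : ℕ) : 0 < μ (G r) := by
    refine hpos _ ?_
    rw [show G r = _ from cylinderOn_eq_inter_pi _ _ x]
    exact inter_mem_nhdsWithin _ ((isOpen_set_pi (Set.finite_Icc _ _)
      fun _ _ ↦ isOpen_discrete _).mem_nhds fun _ _ ↦ rfl)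
  have hanti : Antitone G := fun m n hmn ω hω ↦
    ⟨hω.1, fun i hi hi' ↦ hω.2 i (by omega) (by omega)⟩
  have hnull : μ (⋂ r, G r) = 0 :=
    measure_mono_null (fun ω hω ↦ funext fun i ↦
      (Set.mem_iInter.1 hω i.natAbs).2 i (by omega) (by omega)) (measure_singleton x)
  have hlim : Tendsto (fun r ↦ μ.real (G r)) atTop (𝓝 0) := by
    have := (ENNReal.tendsto_toReal (measure_ne_top μ _)).comp
      (tendsto_measure_iInter_atTop (fun r ↦ (measurableSet_cylinderOn _ _ x).nullMeasurableSet)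
        hanti ⟨0, measure_ne_top μ _⟩)
    rwa [hnull, ENNReal.toReal_zero] at this
  obtain ⟨r, hr⟩ := (hlim.eventually (ge_mem_nhds hε)).exists
  exact ⟨r, G r, ⟨x, rfl, nonempty_of_measure_ne_zero (hGpos r).ne'⟩,
    ENNReal.toReal_pos (hGpos r).ne' (measure_ne_top μ _), hr⟩

lemma isCenteredCylinderSeq_blockSeq {l u L r ρ : ℕ → ℕ} {G H : ℕ → Set (ℤ → Fin M)}
    (hu : ∀ k, u k + L k ≤ u (k + 1)) (hl : ∀ k n, u k ≤ n → 2 * L k ≤ l n)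
    (hG : ∀ k, IsCylinderOn M Amat (-r k) (r k) (G k))
    (hH : ∀ n, IsCylinderOn M Amat (-ρ n) (ρ n) (H n)) :
    IsCenteredCylinderSeq Amat l
      (blockSeq u L (fun k ↦ (shiftMap M)^[u k] ⁻¹' G k) (fun n ↦ (shiftMap M)^[n] ⁻¹' H n)) := by
  intro n
  by_cases h : ∃ k, n ∈ block u L k
  · obtain ⟨k, hk⟩ := h
    rw [blockSeq_of_mem hu hk]
    simp only [block, mem_Ico] at hk
    have := hl k n hk.1
    exact ⟨-r k + u k, r k + u k, by omega, (hG k).preimage_iterate _,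
      abs_le.2 ⟨by omega, by omega⟩⟩
  · rw [blockSeq_of_forall_notMem (not_exists.1 h)]
    refine ⟨-ρ n + n, ρ n + n, by omega, (hH n).preimage_iterate n, ?_⟩
    rw [show -(ρ n : ℤ) + n + (ρ n + n) - 2 * n = 0 by ring, abs_zero]
    exact Nat.cast_nonneg _

def blockStart (T L : ℕ → ℕ) : ℕ → ℕ
  | 0 => T 0 + 1
  | k + 1 => max (blockStart T L k + L k) (T (k + 1))

theorem exists_isCenteredCylinderSeq_of_nullSingleton
    [IsFiniteMeasure μ] [NullSingletonClass μ]
    (hinv : MeasurePreserving (shiftMap M) μ μ) (hsupp : μ (shiftSpace M Amat) ≠ 0)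
    {l : ℕ → ℕ} (hl : Tendsto l atTop atTop) :
    ∃ F, IsCenteredCylinderSeq Amat l F ∧ Tendsto (measureSum μ F) atTop atTop ∧
      FailsSP μ F := by
  choose r G hG hG0 hGε using fun k : ℕ ↦ exists_isCylinderOn_measureReal_pos_le hsupp
    (ε := (6 * (k + 2) ^ 2 + 1 : ℝ)⁻¹) (by positivity)
  choose ρ H hH _ hHε using fun n : ℕ ↦
    exists_isCylinderOn_measureReal_pos_le hsupp (ε := (1 / 2 : ℝ) ^ n) (by positivity)
  set L : ℕ → ℕ := fun k ↦ ⌈(μ.real (G k))⁻¹⌉₊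
  choose T hT using fun k ↦ eventually_atTop.1 (hl.eventually_ge_atTop (2 * L k))
  set u := blockStart T L
  have hu (k : ℕ) : u k + L k ≤ u (k + 1) := le_max_left _ _
  have hTu (k : ℕ) : T k ≤ u k := by
    cases k
    · exact Nat.le_succ _
    · exact le_max_right _ _
  have hE (k : ℕ) : 1 ≤ L k * μ.real ((shiftMap M)^[u k] ⁻¹' G k) ∧
      L k * μ.real ((shiftMap M)^[u k] ⁻¹' G k) ≤ 2 := by
    rw [(hinv.iterate _).measureReal_preimage (hG k).measurableSet.nullMeasurableSet]
    exact ⟨one_le_natCeil_inv_mul (hG0 k), natCeil_inv_mul_le_two (hG0 k)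
      ((hGε k).trans (inv_le_one_of_one_le₀ (by nlinarith)))⟩
  have hL (k : ℕ) : 6 * (k + 2) ^ 2 < L k := by
    have : (6 * (k + 2) ^ 2 + 1 : ℝ) ≤ L k :=
      ((le_inv_comm₀ (hG0 k) (by positivity)).1 (hGε k)).trans (Nat.le_ceil _)
    exact_mod_cast (lt_add_one _).trans_le this
  refine ⟨_, isCenteredCylinderSeq_blockSeq hu (fun k n h ↦ hT k n ((hTu k).trans h)) hG hH,
    tendsto_measureSum_and_failsSP_blockSeq hu (Nat.le_add_left 1 (T 0)) hE (fun n ↦ ?_) hL⟩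
  rw [(hinv.iterate n).measureReal_preimage (hH n).measurableSet.nullMeasurableSet]
  exact hHε n

end Construction

theorem exists_centered_cylinders_failing_SP_general
    (M : ℕ) (Amat : Fin M → Fin M → Bool)
    (μ : Measure (ℤ → Fin M)) [IsProbabilityMeasure μ]
    (hinv : MeasurePreserving (shiftMap M) μ μ) (hsupp : μ (shiftSpace M Amat) = 1)
    (hcylex : ∃ (a b : ℤ) (Ct : Set (ℤ → Fin M)), a ≤ b ∧
      IsCylinderOn M Amat a b Ct ∧ 0 < μ Ct ∧ μ Ct < 1)
    (l : ℕ → ℕ) (hl : Tendsto l atTop atTop) :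
    ∃ (C : ℕ → Set (ℤ → Fin M)) (a b : ℕ → ℤ),
      (∀ n, 1 ≤ n → a n ≤ b n ∧ IsCylinderOn M Amat (a n) (b n) (C n) ∧
        |a n + b n| ≤ (l n : ℤ)) ∧
      Tendsto (fun N : ℕ => ∑ n ∈ Finset.Icc 1 N, (μ (C n)).toReal) atTop atTop ∧
      ∀ K : ℝ, 0 < K → ∃ N : ℕ, 1 ≤ N ∧
        K * ∑ n ∈ Finset.Icc 1 N, (μ (C n)).toReal <
          ∑ m ∈ Finset.Icc 1 N, ∑ n ∈ Finset.Icc 1 N,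
            ((μ ((shiftMap M)^[m] ⁻¹' C m ∩ (shiftMap M)^[n] ⁻¹' C n)).toReal -
              (μ (C m)).toReal * (μ (C n)).toReal) := by
  obtain ⟨F, hF, hdiv, hSP⟩ : ∃ F, IsCenteredCylinderSeq Amat l F ∧
      Tendsto (measureSum μ F) atTop atTop ∧ FailsSP μ F := by
    by_cases hatom : ∃ x, μ {x} ≠ 0
    · obtain ⟨x, hx⟩ := hatom
      obtain ⟨_, _, Ct, -, hCt, hCt0, hCt1⟩ := hcylex
      exact exists_isCenteredCylinderSeq_of_atom hsupp hCt hCt0 hCt1 hx l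
    · have : NullSingletonClass μ := ⟨by simpa using hatom⟩
      exact exists_isCenteredCylinderSeq_of_nullSingleton hinv (by simp [hsupp]) hl
  exact exists_cylinders_of_isCenteredCylinderSeq hinv hF hdiv hSP

/-- **Theorem 2.3.** Let `μ` be a shift-invariant probability measure on the
two-sided subshift `Σ_A` admitting a cylinder of measure strictly between `0`
and `1`, and let `(l n)` be positive integers with `l n → ∞`. Then there is a
sequence of cylinders `(C n)` on intervals `Λ n = [a n, b n]` that are
`(l n)`-centered (`|a n + b n| ≤ l n`), with divergent sum of measures, which
does not satisfy condition (SP). -/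
theorem exists_centered_cylinders_failing_SP
    (M : ℕ) (hM : 2 ≤ M) (Amat : Fin M → Fin M → Bool)
    (μ : Measure (ℤ → Fin M)) [IsProbabilityMeasure μ]
    (hinv : MeasurePreserving (shiftMap M) μ μ) (hsupp : μ (shiftSpace M Amat) = 1)
    (hcylex : ∃ (a b : ℤ) (Ct : Set (ℤ → Fin M)), a ≤ b ∧
      IsCylinderOn M Amat a b Ct ∧ 0 < μ Ct ∧ μ Ct < 1)
    (l : ℕ → ℕ) (hlpos : ∀ n, 1 ≤ n → 0 < l n) (hl : Tendsto l atTop atTop) :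
    ∃ (C : ℕ → Set (ℤ → Fin M)) (a b : ℕ → ℤ),
      (∀ n, 1 ≤ n → a n ≤ b n ∧ IsCylinderOn M Amat (a n) (b n) (C n) ∧
        |a n + b n| ≤ (l n : ℤ)) ∧
      Tendsto (fun N : ℕ => ∑ n ∈ Finset.Icc 1 N, (μ (C n)).toReal) atTop atTop ∧
      ∀ K : ℝ, 0 < K → ∃ N : ℕ, 1 ≤ N ∧
        K * ∑ n ∈ Finset.Icc 1 N, (μ (C n)).toReal <
          ∑ m ∈ Finset.Icc 1 N, ∑ n ∈ Finset.Icc 1 N,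
            ((μ ((shiftMap M)^[m] ⁻¹' C m ∩ (shiftMap M)^[n] ⁻¹' C n)).toReal -
              (μ (C m)).toReal * (μ (C n)).toReal) :=
  exists_centered_cylinders_failing_SP_general M Amat μ hinv hsupp hcylex l hl
end

section
/- (Theorem 2.5.) Let μ be a σ-invariant Borel probability measure on the two-sided subshift Σ_A satisfying the Gibbs estimate (Fact 1): there are c₁, c₂ > 0 and θ₁, θ₂ ∈ (0,1) with c₁θ₁^{|Λ|} ≤ μ(C) ≤ c₂θ₂^{|Λ|} for every cylinder C on a finite interval Λ. Assume moreover that there are constants 0 < a ≤ b such that for every k ≥ 2 there exists a cylinder C̃_k defined on an interval [0, m_k] with a/(k (ln k)²) ≤ μ(C̃_k) ≤ b/(k (ln k)²). Let ε > 0. Then there exists a sequence of cylinders (C_n)_{n≥1} defined on finite intervals Λ_n ⊂ ℤ whose left endpoints lie in [0, ε·|Λ_n|], such that ∑_{n=1}^∞ μ(C_n) = ∞, and yet for μ-almost every ω ∈ Σ_A there are only finitely many n with σ^n(ω) ∈ C_n; in particular (C_n) is not a Borel–Cantelli sequence. -/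
open MeasureTheory Filter

/-- helper series functions -/
noncomputable def auxF (p : ℕ) (n : ℕ) : ℝ :=
  if n ≤ 1 then 2 else 1 / (n * Real.log n ^ p)

lemma auxF_nonneg (p n : ℕ) : 0 ≤ auxF p n := by
  unfold auxF; split
  · norm_num
  · positivity

lemma log_nat_ge (n : ℕ) (hn : 2 ≤ n) : (1:ℝ)/2 ≤ Real.log n := by
  have h2 : (1:ℝ)/2 ≤ Real.log 2 := by
    have := Real.log_two_gt_d9; linarith
  calc (1:ℝ)/2 ≤ Real.log 2 := h2
    _ ≤ Real.log n := Real.log_le_log (by norm_num) (by exact_mod_cast hn)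

lemma auxF_antitone (p : ℕ) (hp : p ≤ 2) : ∀ ⦃i j : ℕ⦄, 0 < i → i ≤ j → auxF p j ≤ auxF p i := by
  intro i j hi hij
  unfold auxF
  by_cases hj : j ≤ 1
  · rw [if_pos hj, if_pos (by omega)]
  · rw [if_neg hj]
    have hj2 : 2 ≤ j := by omega
    have hlogj : (1:ℝ)/2 ≤ Real.log j := log_nat_ge j hj2
    have hjpos : (0:ℝ) < j := by positivity
    have hbig : (1:ℝ)/2 ≤ (j:ℝ) * Real.log j ^ p := by
      have h1 : ((1:ℝ)/2) ^ p ≤ Real.log j ^ p :=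
        pow_le_pow_left₀ (by norm_num) hlogj p
      have h2 : ((1:ℝ)/4 : ℝ) ≤ ((1:ℝ)/2) ^ p := by
        interval_cases p <;> norm_num
      have hj2' : (2:ℝ) ≤ j := by exact_mod_cast hj2
      nlinarith
    by_cases hi1 : i ≤ 1
    · rw [if_pos hi1]
      rw [div_le_iff₀ (by linarith)]
      linarith
    · rw [if_neg hi1]
      have hi2 : 2 ≤ i := by omega
      have hlogi : (1:ℝ)/2 ≤ Real.log i := log_nat_ge i hi2
      have hipos : (0:ℝ) < i := by positivity
      have hplog : (0:ℝ) < Real.log i ^ p := pow_pos (by linarith) p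
      apply one_div_le_one_div_of_le
      · positivity
      · have hii : (i:ℝ) ≤ j := by exact_mod_cast hij
        have hlog : Real.log i ≤ Real.log j := Real.log_le_log (by positivity) hii
        gcongr

lemma two_pow_succ_gt_one (k : ℕ) : ¬ (2:ℕ) ^ (k+1) ≤ 1 :=
  Nat.not_le.mpr (Nat.one_lt_two_pow_iff.mpr (by omega))

lemma log_two_ne_zero : Real.log 2 ≠ 0 := by
  have := Real.log_two_gt_d9; intro h; rw [h] at this; norm_num at this

lemma summable_auxF_two : Summable (auxF 2) := by
  rw [← summable_condensed_iff_of_nonneg (fun n => auxF_nonneg 2 n) (auxF_antitone 2 le_rfl)]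
  rw [← summable_nat_add_iff 1]
  have hs : Summable (fun k : ℕ => ((Real.log 2)^2)⁻¹ * (1 / ((k:ℝ)+1)^2)) := by
    apply Summable.mul_left
    have h0 : Summable (fun k : ℕ => 1 / ((k:ℝ))^2) :=
      (Real.summable_one_div_nat_pow (p := 2)).mpr (by norm_num)
    have := (summable_nat_add_iff 1).mpr h0
    apply this.congr
    intro k; push_cast; ring
  apply hs.congr
  intro k
  rw [show auxF 2 (2 ^ (k+1)) = 1 / (((2:ℕ) ^ (k+1) : ℕ) * Real.log ((2:ℕ) ^ (k+1) : ℕ) ^ 2) by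
    unfold auxF; rw [if_neg (two_pow_succ_gt_one k)]]
  rw [Nat.cast_pow, Real.log_pow]
  push_cast
  have h2pow : (0:ℝ) < (2:ℝ)^(k+1) := by positivity
  field_simp

lemma not_summable_auxF_one : ¬ Summable (auxF 1) := by
  rw [← summable_condensed_iff_of_nonneg (fun n => auxF_nonneg 1 n) (auxF_antitone 1 (by norm_num))]
  intro hsum
  have h1 := (summable_nat_add_iff (f := fun k : ℕ => (2:ℝ)^k * auxF 1 (2^k)) 1).mpr hsum
  have h2 : Summable (fun k : ℕ => (Real.log 2)⁻¹ * (1 / ((k:ℝ)+1))) := by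
    apply h1.congr
    intro k
    show (2:ℝ) ^ (k+1) * auxF 1 (2 ^ (k+1)) = _
    rw [show auxF 1 (2 ^ (k+1)) = 1 / (((2:ℕ) ^ (k+1) : ℕ) * Real.log ((2:ℕ) ^ (k+1) : ℕ) ^ 1) by
      unfold auxF; rw [if_neg (two_pow_succ_gt_one k)]]
    rw [Nat.cast_pow, Real.log_pow]
    push_cast
    have h2pow : (0:ℝ) < (2:ℝ)^(k+1) := by positivity
    field_simp
  have h3 : Summable (fun k : ℕ => 1 / ((k:ℝ)+1)) := by
    have := h2.mul_left (Real.log 2)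
    apply this.congr
    intro k; field_simp
  have h4 : Summable (fun k : ℕ => 1 / (k:ℝ)) := by
    rw [← summable_nat_add_iff 1]
    apply h3.congr; intro k; push_cast; ring
  exact Real.not_summable_one_div_natCast h4


lemma shiftMap_iterate (M : ℕ) (p : ℕ) (ω : ℤ → Fin M) (i : ℤ) :
    (shiftMap M)^[p] ω i = ω (i + p) := by
  induction p generalizing ω i with
  | zero => simp
  | succ p ih =>
    rw [Function.iterate_succ_apply, ih]
    show ω (i + p + 1) = _
    congr 1
    push_cast
    ring

lemma shiftMap_surjective (M : ℕ) : Function.Surjective (shiftMap M) := by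
  intro ω
  exact ⟨fun i => ω (i - 1), funext fun i => by simp [shiftMap]⟩

lemma mem_shiftSpace_iterate (M : ℕ) (Amat : Fin M → Fin M → Bool) (p : ℕ) (ω : ℤ → Fin M) :
    (shiftMap M)^[p] ω ∈ shiftSpace M Amat ↔ ω ∈ shiftSpace M Amat := by
  simp only [shiftSpace, Set.mem_setOf_eq, shiftMap_iterate]
  constructor
  · intro h i
    have := h (i - p)
    simpa [sub_add_cancel, sub_add_eq_add_sub] using this
  · intro h i
    have := h (i + p)
    convert this using 3
    ring

lemma isCylinderOn_shift (M : ℕ) (Amat : Fin M → Fin M → Bool) (mm : ℤ) (hmm : 0 ≤ mm)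
    (p : ℕ) (Ct : Set (ℤ → Fin M)) (h : IsCylinderOn M Amat 0 mm Ct) :
    IsCylinderOn M Amat p (p + mm) ((shiftMap M)^[p] ⁻¹' Ct) := by
  obtain ⟨w, hw, hne⟩ := h
  refine ⟨fun i => w (i - p), ?_, ?_⟩
  · ext ω
    simp only [Set.mem_preimage, hw, Set.mem_setOf_eq, mem_shiftSpace_iterate]
    constructor
    · rintro ⟨h1, h2⟩
      refine ⟨h1, fun i hi1 hi2 => ?_⟩
      have := h2 (i - p) (by omega) (by omega)
      rwa [shiftMap_iterate, sub_add_cancel] at this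
    · rintro ⟨h1, h2⟩
      refine ⟨h1, fun i hi1 hi2 => ?_⟩
      rw [shiftMap_iterate]
      have := h2 (i + p) (by omega) (by omega)
      rwa [add_sub_cancel_right] at this
  · obtain ⟨x, hx⟩ := hne
    obtain ⟨ω, rfl⟩ := (shiftMap_surjective M).iterate p x
    exact ⟨ω, hx⟩

lemma isCylinderOn_measurableSet (M : ℕ) (Amat : Fin M → Fin M → Bool) (a b : ℤ)
    (C : Set (ℤ → Fin M)) (h : IsCylinderOn M Amat a b C) : MeasurableSet C := by
  obtain ⟨w, rfl, -⟩ := h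
  have hS : MeasurableSet (shiftSpace M Amat) := by
    have : shiftSpace M Amat =
        ⋂ i : ℤ, (fun ω : ℤ → Fin M => (ω i, ω (i+1))) ⁻¹' {q : Fin M × Fin M | Amat q.1 q.2 = true} := by
      ext ω; simp [shiftSpace]
    rw [this]
    exact MeasurableSet.iInter fun i =>
      (((measurable_pi_apply i).prodMk (measurable_pi_apply (i+1)))
        (Set.toFinite _).measurableSet)
  have : {ω : ℤ → Fin M | ω ∈ shiftSpace M Amat ∧ ∀ i : ℤ, a ≤ i → i ≤ b → ω i = w i}
      = shiftSpace M Amat ∩ ⋂ i : ℤ, {ω : ℤ → Fin M | a ≤ i → i ≤ b → ω i = w i} := by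
    ext ω; simp [Set.mem_iInter]
  rw [this]
  refine hS.inter (MeasurableSet.iInter fun i => ?_)
  by_cases hi : a ≤ i ∧ i ≤ b
  · have : {ω : ℤ → Fin M | a ≤ i → i ≤ b → ω i = w i}
        = (fun ω : ℤ → Fin M => ω i) ⁻¹' {w i} := by
      ext ω; simp [hi.1, hi.2]
    rw [this]
    exact (measurable_pi_apply i) (measurableSet_singleton _)
  · have : {ω : ℤ → Fin M | a ≤ i → i ≤ b → ω i = w i} = Set.univ := by
      ext ω
      simp only [Set.mem_setOf_eq, Set.mem_univ, iff_true]
      intro h1 h2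
      exact absurd ⟨h1, h2⟩ hi
    rw [this]
    exact MeasurableSet.univ


set_option maxHeartbeats 1000000 in
/-- **Theorem 2.5.** Let `μ` be a shift-invariant probability measure on the
two-sided subshift satisfying the Gibbs estimate (Fact 1), and suppose that for
every `k ≥ 2` there is a cylinder on an interval `[0, m k]` whose measure is
comparable to `1/(k (ln k)²)`. Then for every `ε > 0` there is a sequence of
cylinders `(C n)` on intervals `Λ n = [a n, b n]` with left endpoints in
`[0, ε·|Λ n|]`, with divergent sum of measures, such that a.e. `ω` enters only
finitely many sets `σ^{-n}(C n)`; in particular `(C n)` is not Borel–Cantelli. -/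
theorem exists_aligned_cylinders_not_BC
    (M : ℕ) (hM : 2 ≤ M) (Amat : Fin M → Fin M → Bool)
    (μ : Measure (ℤ → Fin M)) [IsProbabilityMeasure μ]
    (hinv : MeasurePreserving (shiftMap M) μ μ) (hsupp : μ (shiftSpace M Amat) = 1)
    (c₁ c₂ θ₁ θ₂ : ℝ) (hc₁ : 0 < c₁) (hc₂ : 0 < c₂)
    (hθ₁ : θ₁ ∈ Set.Ioo (0 : ℝ) 1) (hθ₂ : θ₂ ∈ Set.Ioo (0 : ℝ) 1)
    (hFact1 : ∀ a b : ℤ, a ≤ b → ∀ C : Set (ℤ → Fin M), IsCylinderOn M Amat a b C →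
      c₁ * θ₁ ^ (b - a + 1).toNat ≤ (μ C).toReal ∧
      (μ C).toReal ≤ c₂ * θ₂ ^ (b - a + 1).toNat)
    (a b : ℝ) (ha : 0 < a) (hab : a ≤ b)
    (hCt : ∀ k : ℕ, 2 ≤ k → ∃ (m : ℤ) (Ct : Set (ℤ → Fin M)), 0 ≤ m ∧
      IsCylinderOn M Amat 0 m Ct ∧
      a / (k * (Real.log k) ^ 2) ≤ (μ Ct).toReal ∧
      (μ Ct).toReal ≤ b / (k * (Real.log k) ^ 2))
    (ε : ℝ) (hε : 0 < ε) :
    ∃ (C : ℕ → Set (ℤ → Fin M)) (lo hi : ℕ → ℤ),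
      (∀ n, 1 ≤ n → lo n ≤ hi n ∧ IsCylinderOn M Amat (lo n) (hi n) (C n) ∧
        0 ≤ lo n ∧ ((lo n : ℝ) ≤ ε * ((hi n : ℝ) - (lo n : ℝ) + 1))) ∧
      Tendsto (fun N : ℕ => ∑ n ∈ Finset.Icc 1 N, (μ (C n)).toReal) atTop atTop ∧
      (∀ᵐ ω ∂μ, {n : ℕ | 0 < n ∧ (shiftMap M)^[n] ω ∈ C n}.Finite) ∧
      ¬ (∀ᵐ ω ∂μ, ∃ᶠ n in atTop, (shiftMap M)^[n] ω ∈ C n) := by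
  classical
  obtain ⟨hθ₁0, hθ₁1⟩ := hθ₁
  -- choose the cylinders
  have hCt' : ∀ k : ℕ, ∃ (mz : ℤ) (Cz : Set (ℤ → Fin M)), 2 ≤ k →
      (0 ≤ mz ∧ IsCylinderOn M Amat 0 mz Cz ∧
        a / (k * Real.log k ^ 2) ≤ (μ Cz).toReal ∧ (μ Cz).toReal ≤ b / (k * Real.log k ^ 2)) := by
    intro k
    by_cases hk : 2 ≤ k
    · obtain ⟨mz, Cz, h1, h2, h3, h4⟩ := hCt k hk
      exact ⟨mz, Cz, fun _ => ⟨h1, h2, h3, h4⟩⟩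
    · exact ⟨0, ∅, fun h => absurd h hk⟩
  choose m Ct hm using hCt'
  set L : ℕ → ℕ := fun k => ⌊ε * ((m k : ℝ) + 1)⌋₊ + 1 with hLdef
  set N : ℕ → ℕ := fun k => 1 + ∑ i ∈ Finset.Ico 2 k, L i with hNdef
  have hN1 : ∀ k, 1 ≤ N k := fun k => Nat.le_add_right 1 _
  have hNmono : Monotone N := by
    intro x y hxy
    exact Nat.add_le_add_left (Finset.sum_le_sum_of_subset (Finset.Ico_subset_Ico_right hxy)) 1
  have hN2 : N 2 = 1 := by simp [hNdef]
  have hNrec : ∀ k, 2 ≤ k → N (k + 1) = N k + L k := by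
    intro k hk
    simp only [hNdef, Finset.sum_Ico_succ_top hk, add_assoc]
  have hNge : ∀ k, k ≤ N k + 1 := by
    intro k
    have hcard : (Finset.Ico 2 k).card • 1 ≤ ∑ i ∈ Finset.Ico 2 k, L i :=
      Finset.card_nsmul_le_sum _ _ _ (fun i _ => by simp [hLdef])
    simp only [smul_eq_mul, mul_one, Nat.card_Ico] at hcard
    simp only [hNdef]
    omega
  set K : ℕ → ℕ := fun n => Nat.findGreatest (fun k => N k ≤ n) (n + 1) with hKdef
  have hKspec : ∀ n, 1 ≤ n → 2 ≤ K n ∧ N (K n) ≤ n ∧ n < N (K n + 1) := by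
    intro n hn
    have hN2n : N 2 ≤ n := by omega
    have h2 : 2 ≤ K n := Nat.le_findGreatest (by omega) hN2n
    have hle : N (K n) ≤ n := Nat.findGreatest_spec (P := fun k => N k ≤ n) (by omega) hN2n
    refine ⟨h2, hle, ?_⟩
    have hKle : K n ≤ n + 1 := Nat.findGreatest_le _
    by_cases hc : K n + 1 ≤ n + 1
    · have hng := Nat.findGreatest_is_greatest (P := fun k => N k ≤ n)
        (Nat.lt_succ_self (K n)) hc
      simp only [Nat.succ_eq_add_one] at hng
      omega
    · have hKn : K n = n + 1 := by omega
      have := hNge (K n + 1)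
      omega
  have hKval : ∀ k, 2 ≤ k → ∀ n, N k ≤ n → n < N (k + 1) → K n = k := by
    intro k hk n h1 h2
    rw [hKdef]
    rw [Nat.findGreatest_eq_iff]
    refine ⟨by have := hNge k; omega, fun _ => h1, fun j hj hj' hcon => ?_⟩
    have : N (k + 1) ≤ N j := hNmono hj
    omega
  set J : ℕ → ℕ := fun n => N (K n + 1) - 1 - n with hJdef
  set C : ℕ → Set (ℤ → Fin M) :=
    fun n => if n = 0 then ∅ else (shiftMap M)^[J n] ⁻¹' Ct (K n) with hCdef
  set E : ℕ → Set (ℤ → Fin M) :=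
    fun k => (shiftMap M)^[N (k + 1) - 1] ⁻¹' Ct k with hEdef
  have hCn : ∀ n, 1 ≤ n → C n = (shiftMap M)^[J n] ⁻¹' Ct (K n) := by
    intro n hn
    simp only [hCdef, if_neg (by omega : ¬ n = 0)]
  have hmeasCt : ∀ k, 2 ≤ k → MeasurableSet (Ct k) := fun k hk =>
    isCylinderOn_measurableSet M Amat 0 (m k) (Ct k) (hm k hk).2.1
  have hμC : ∀ n, 1 ≤ n → μ (C n) = μ (Ct (K n)) := by
    intro n hn
    rw [hCn n hn]
    exact (hinv.iterate (J n)).measure_preimage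
      ((hmeasCt _ (hKspec n hn).1).nullMeasurableSet)
  have hμE : ∀ k, 2 ≤ k → μ (E k) = μ (Ct k) := by
    intro k hk
    exact (hinv.iterate _).measure_preimage ((hmeasCt _ hk).nullMeasurableSet)
  -- block sums
  have hblock : ∀ k, 2 ≤ k → ∑ n ∈ Finset.Icc 1 (N k - 1), (μ (C n)).toReal
      = ∑ i ∈ Finset.Ico 2 k, (L i : ℝ) * (μ (Ct i)).toReal := by
    intro k hk
    induction k, hk using Nat.le_induction with
    | base => simp [hN2]
    | succ k hk ih =>
      have hIcc : ∀ k', 2 ≤ k' → Finset.Icc 1 (N k' - 1) = Finset.Ico 1 (N k') := by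
        intro k' hk'
        have h := hN1 k'
        ext x
        simp only [Finset.mem_Icc, Finset.mem_Ico]
        omega
      rw [hIcc _ (by omega), ← Finset.sum_Ico_consecutive _ (hN1 k) (hNmono (Nat.le_succ k)),
        ← hIcc _ hk, ih]
      have hinner : ∀ n ∈ Finset.Ico (N k) (N (k + 1)), (μ (C n)).toReal = (μ (Ct k)).toReal := by
        intro n hn'
        rw [Finset.mem_Ico] at hn'
        have hn1 : 1 ≤ n := le_trans (hN1 k) hn'.1
        rw [hμC n hn1, hKval k hk n hn'.1 hn'.2]
      rw [Finset.sum_congr rfl hinner, Finset.sum_const, Nat.card_Ico, hNrec k hk,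
        Finset.sum_Ico_succ_top hk]
      simp only [nsmul_eq_mul]
      rw [show N k + L k - N k = L k from by omega]
  -- Gibbs lower bound : eventual term bound
  set D : ℝ := -Real.log θ₁ with hDdef
  have hD : 0 < D := by
    rw [hDdef]
    have := Real.log_neg hθ₁0 hθ₁1
    linarith
  have hEv : ∀ᶠ (k : ℕ) in atTop,
      (ε * a / (2 * D)) * (1 / (k * Real.log k)) ≤ (L k : ℝ) * (μ (Ct k)).toReal := by
    have htend : Tendsto (fun k : ℕ => Real.log k) atTop atTop :=
      Real.tendsto_log_atTop.comp tendsto_natCast_atTop_atTop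
    filter_upwards [htend.eventually_ge_atTop (2 * (Real.log b - Real.log c₁)),
      htend.eventually_ge_atTop 1, eventually_ge_atTop 2] with k hlogA hlog1 hk2
    obtain ⟨hm0, hcyl, hlow, hupp⟩ := hm k hk2
    set p : ℕ := (m k + 1).toNat with hpdef
    have hp : (p : ℝ) = (m k : ℝ) + 1 := by
      have h' : ((p : ℤ)) = m k + 1 := Int.toNat_of_nonneg (by omega)
      exact_mod_cast h'
    have hgibbs : c₁ * θ₁ ^ p ≤ (μ (Ct k)).toReal := by
      have := (hFact1 0 (m k) hm0 (Ct k) hcyl).1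
      simpa using this
    have hkpos : (0 : ℝ) < k := by exact_mod_cast (by omega : 0 < k)
    have hlogk : (1 : ℝ) ≤ Real.log k := hlog1
    have hlogpos : (0 : ℝ) < Real.log k := lt_of_lt_of_le one_pos hlogk
    have hb : (0 : ℝ) < b := lt_of_lt_of_le ha hab
    have hX : (0 : ℝ) < (k : ℝ) * Real.log k ^ 2 := mul_pos hkpos (pow_pos hlogpos 2)
    have hθp : (0 : ℝ) < θ₁ ^ p := pow_pos hθ₁0 p
    have hchain : θ₁ ^ p ≤ b / (c₁ * ((k : ℝ) * Real.log k ^ 2)) := by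
      rw [le_div_iff₀ (mul_pos hc₁ hX)]
      have : c₁ * θ₁ ^ p ≤ b / ((k : ℝ) * Real.log k ^ 2) := le_trans hgibbs hupp
      rw [le_div_iff₀ hX] at this
      nlinarith
    have hlog_chain : (p : ℝ) * Real.log θ₁ ≤
        Real.log b - Real.log c₁ - Real.log ((k : ℝ) * Real.log k ^ 2) := by
      have h1 : Real.log (θ₁ ^ p) ≤ Real.log (b / (c₁ * ((k : ℝ) * Real.log k ^ 2))) :=
        Real.log_le_log hθp hchain
      rw [Real.log_pow] at h1
      rw [Real.log_div (ne_of_gt hb) (ne_of_gt (mul_pos hc₁ hX)),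
        Real.log_mul (ne_of_gt hc₁) (ne_of_gt hX)] at h1
      push_cast at h1 ⊢
      linarith
    have hlogX : Real.log k ≤ Real.log ((k : ℝ) * Real.log k ^ 2) := by
      rw [Real.log_mul (ne_of_gt hkpos) (ne_of_gt (pow_pos hlogpos 2)), Real.log_pow]
      have : 0 ≤ Real.log (Real.log k) := Real.log_nonneg hlogk
      push_cast
      linarith
    have hpD : Real.log k / (2 * D) ≤ (p : ℝ) := by
      have h2 : (p : ℝ) * D ≥ Real.log k - (Real.log b - Real.log c₁) := by
        rw [hDdef]; nlinarith [hlog_chain, hlogX]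
      have h3 : Real.log k - (Real.log b - Real.log c₁) ≥ Real.log k / 2 := by linarith
      rw [div_le_iff₀ (by linarith : (0:ℝ) < 2 * D)]
      nlinarith
    have hLk : ε * (p : ℝ) ≤ (L k : ℝ) := by
      have hfl : ε * ((m k : ℝ) + 1) < (⌊ε * ((m k : ℝ) + 1)⌋₊ : ℝ) + 1 :=
        Nat.lt_floor_add_one _
      have hLcast : (L k : ℝ) = (⌊ε * ((m k : ℝ) + 1)⌋₊ : ℝ) + 1 := by
        rw [hLdef]; push_cast; ring
      rw [hLcast, hp]
      linarith
    have hfinal : (ε * (Real.log k / (2 * D))) * (a / ((k : ℝ) * Real.log k ^ 2))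
        ≤ (L k : ℝ) * (μ (Ct k)).toReal := by
      apply mul_le_mul
      · calc ε * (Real.log k / (2 * D)) ≤ ε * (p : ℝ) := by
              apply mul_le_mul_of_nonneg_left hpD (le_of_lt hε)
          _ ≤ (L k : ℝ) := hLk
      · exact hlow
      · positivity
      · positivity
    calc (ε * a / (2 * D)) * (1 / (k * Real.log k))
        = (ε * (Real.log k / (2 * D))) * (a / ((k : ℝ) * Real.log k ^ 2)) := by
          field_simp
      _ ≤ (L k : ℝ) * (μ (Ct k)).toReal := hfinal
  obtain ⟨k₀, hk₀⟩ := eventually_atTop.1 hEv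
  set k₁ : ℕ := max k₀ 3 with hk₁def
  set c : ℝ := ε * a / (2 * D) with hcdef
  have hc : 0 < c := by rw [hcdef]; positivity
  set g : ℕ → ℝ := fun k => if k < k₁ then 0 else c * (1 / (k * Real.log k)) with hgdef
  have hg_nonneg : ∀ k, 0 ≤ g k := by
    intro k
    rw [hgdef]
    dsimp only
    split
    · exact le_rfl
    · rename_i hknl
      have hk3 : 3 ≤ k := le_trans (le_max_right _ _) (not_lt.mp hknl)
      have hlog : (0:ℝ) ≤ Real.log k := Real.log_nonneg (by exact_mod_cast (by omega : 1 ≤ k))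
      have hk0 : (0:ℝ) ≤ (k:ℝ) := by positivity
      exact mul_nonneg hc.le (one_div_nonneg.mpr (mul_nonneg hk0 hlog))
  have hg_le : ∀ k, 2 ≤ k → g k ≤ (L k : ℝ) * (μ (Ct k)).toReal := by
    intro k hk
    rw [hgdef]
    dsimp only
    split
    · exact mul_nonneg (by positivity) ENNReal.toReal_nonneg
    · rename_i hknl
      exact hk₀ k (le_trans (le_max_left _ _) (not_lt.mp hknl))
  have hg_not_summable : ¬ Summable g := by
    intro hs
    apply not_summable_auxF_one
    have h1 := (summable_nat_add_iff (f := g) k₁).mpr hs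
    have h2 : Summable (fun n : ℕ => auxF 1 (n + k₁)) := by
      have h3 := h1.mul_left c⁻¹
      apply h3.congr
      intro n
      have hle : 3 ≤ n + k₁ := le_trans (le_max_right _ _) (Nat.le_add_left _ _)
      rw [hgdef]
      dsimp only
      rw [if_neg (by omega)]
      unfold auxF
      rw [if_neg (by omega)]
      rw [pow_one, ← mul_assoc, inv_mul_cancel₀ hc.ne', one_mul]
    exact (summable_nat_add_iff (f := auxF 1) k₁).mp h2
  have hgT : Tendsto (fun n => ∑ i ∈ Finset.range n, g i) atTop atTop :=
    (not_summable_iff_tendsto_nat_atTop_of_nonneg hg_nonneg).mp hg_not_summable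
  -- a.e. finiteness
  have htsum : (∑' k, μ (E k)) ≠ ⊤ := by
    have hsumh : Summable (fun k : ℕ => (μ (E k)).toReal) := by
      set h : ℕ → ℝ := fun k => if k < 2 then 1 else b * auxF 2 k with hhdef
      have base : Summable (fun n : ℕ => b * auxF 2 (n + 2)) :=
        (summable_nat_add_iff (f := fun n => b * auxF 2 n) 2).mpr (summable_auxF_two.mul_left b)
      have hsh : Summable h := by
        apply (summable_nat_add_iff (f := h) 2).mp
        apply base.congr
        intro n
        rw [hhdef]
        dsimp only
        rw [if_neg (by omega)]
      apply Summable.of_nonneg_of_le (fun k => ENNReal.toReal_nonneg) _ hsh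
      intro k
      rw [hhdef]
      dsimp only
      split
      · exact ENNReal.toReal_le_of_le_ofReal zero_le_one (by simpa using prob_le_one)
      · rename_i hk2'
        have hk2 : 2 ≤ k := by omega
        have hub := (hm k hk2).2.2.2
        rw [show (μ (E k)).toReal = (μ (Ct k)).toReal from by rw [hμE k hk2]]
        calc (μ (Ct k)).toReal ≤ b / ((k : ℕ) * Real.log (k : ℕ) ^ 2) := hub
          _ = b * auxF 2 k := by unfold auxF; rw [if_neg (by omega), mul_one_div]
    have heq : (∑' k, μ (E k)) = ENNReal.ofReal (∑' k, (μ (E k)).toReal) := by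
      rw [ENNReal.ofReal_tsum_of_nonneg (fun _ => ENNReal.toReal_nonneg) hsumh]
      exact tsum_congr fun k => (ENNReal.ofReal_toReal (measure_ne_top μ _)).symm
    rw [heq]
    exact ENNReal.ofReal_ne_top
  have hae : ∀ᵐ ω ∂μ, ∀ᶠ k in atTop, ω ∉ E k := ae_eventually_notMem htsum
  have hfin : ∀ᵐ ω ∂μ, {n : ℕ | 0 < n ∧ (shiftMap M)^[n] ω ∈ C n}.Finite := by
    filter_upwards [hae] with ω hω
    obtain ⟨K₀, hK₀⟩ := eventually_atTop.1 hω
    apply Set.Finite.subset (Set.finite_Iio (N (K₀ + 1)))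
    rintro n ⟨hn, hmem⟩
    obtain ⟨hK2, hNle, hNlt⟩ := hKspec n hn
    have hE : ω ∈ E (K n) := by
      rw [hCn n hn, Set.mem_preimage, ← Function.iterate_add_apply] at hmem
      have hJn : J n + n = N (K n + 1) - 1 := by
        simp only [hJdef]
        omega
      rw [hEdef]
      dsimp only
      rw [← hJn]
      exact hmem
    have hKn : K n < K₀ := by
      by_contra hcon
      push_neg at hcon
      exact hK₀ (K n) hcon hE
    have hmon : N (K n + 1) ≤ N (K₀ + 1) := hNmono (by omega)
    exact Set.mem_Iio.mpr (by omega)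
  refine ⟨C, fun n => (J n : ℤ), fun n => (J n : ℤ) + m (K n), ?_, ?_, hfin, ?_⟩
  · -- cylinder structure
    intro n hn
    obtain ⟨hK2, hNle, hNlt⟩ := hKspec n hn
    obtain ⟨hm0, hcyl, hlow, hupp⟩ := hm (K n) hK2
    refine ⟨le_add_of_nonneg_right hm0, ?_, Int.natCast_nonneg _, ?_⟩
    · rw [hCn n hn]
      exact isCylinderOn_shift M Amat (m (K n)) hm0 (J n) (Ct (K n)) hcyl
    · have hJL : J n ≤ ⌊ε * ((m (K n) : ℝ) + 1)⌋₊ := by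
        have := hNrec (K n) hK2
        simp only [hJdef]
        simp only [hLdef] at this
        omega
      have hfloor : (⌊ε * ((m (K n) : ℝ) + 1)⌋₊ : ℝ) ≤ ε * ((m (K n) : ℝ) + 1) :=
        Nat.floor_le (by positivity)
      have hcast : ((J n : ℤ) : ℝ) ≤ (⌊ε * ((m (K n) : ℝ) + 1)⌋₊ : ℝ) := by
        exact_mod_cast hJL
      have : (((J n : ℤ) + m (K n) : ℤ) : ℝ) - ((J n : ℤ) : ℝ) + 1 = (m (K n) : ℝ) + 1 := by
        push_cast; ring
      rw [this]
      linarith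
  · -- divergence
    apply tendsto_atTop_atTop_of_monotone
    · intro x y hxy
      apply Finset.sum_le_sum_of_subset_of_nonneg (Finset.Icc_subset_Icc_right hxy)
      intro i _ _
      exact ENNReal.toReal_nonneg
    · intro B
      obtain ⟨n₀, hn₀⟩ := ((hgT.eventually_ge_atTop B).and (eventually_ge_atTop 3)).exists
      obtain ⟨hn₀B, hn₀3⟩ := hn₀
      refine ⟨N n₀ - 1, ?_⟩
      rw [hblock n₀ (by omega)]
      have hsum_split : ∑ i ∈ Finset.range n₀, g i =
          ∑ i ∈ Finset.Ico 0 2, g i + ∑ i ∈ Finset.Ico 2 n₀, g i := by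
        rw [Finset.sum_Ico_consecutive _ (by omega) (by omega)]
        rw [Finset.range_eq_Ico]
      have hg01 : ∑ i ∈ Finset.Ico 0 2, g i = 0 := by
        have h0 : g 0 = 0 := by rw [hgdef]; dsimp only; rw [if_pos (by omega)]
        have h1 : g 1 = 0 := by rw [hgdef]; dsimp only; rw [if_pos (by omega)]
        rw [← Finset.range_eq_Ico, Finset.sum_range_succ, Finset.sum_range_one, h0, h1, add_zero]
      have hterm : ∑ i ∈ Finset.Ico 2 n₀, g i ≤
          ∑ i ∈ Finset.Ico 2 n₀, (L i : ℝ) * (μ (Ct i)).toReal := by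
        apply Finset.sum_le_sum
        intro i hi
        rw [Finset.mem_Ico] at hi
        exact hg_le i hi.1
      calc B ≤ ∑ i ∈ Finset.range n₀, g i := hn₀B
        _ = ∑ i ∈ Finset.Ico 2 n₀, g i := by rw [hsum_split, hg01, zero_add]
        _ ≤ ∑ i ∈ Finset.Ico 2 n₀, (L i : ℝ) * (μ (Ct i)).toReal := hterm
  · -- not BC
    intro hcon
    haveI : (MeasureTheory.ae μ).NeBot := ae_neBot.mpr (IsProbabilityMeasure.ne_zero μ)
    obtain ⟨ω, hfinω, hfreq⟩ := (hfin.and hcon).exists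
    obtain ⟨B, hB⟩ := hfinω.bddAbove
    obtain ⟨n, hnB, hmem⟩ := (frequently_atTop.mp hfreq) (B + 1)
    have : n ≤ B := hB (⟨by omega, hmem⟩ : n ∈ {n : ℕ | 0 < n ∧ (shiftMap M)^[n] ω ∈ C n})
    omega
end
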